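/- Let Θ be a substitution, i.e., a monoid endomorphism of the free monoid sending every variable to a nonempty word. If an identity u ≈ v satisfies property P_{1,1} (respectively P_{2,2}, P_{1,2}, P_{1,μ}, P_{μ,2}), then the identity Θ(u) ≈ Θ(v) satisfies the same property; that is, each of these five properties of identities is substitution-stable. -/

import Mathlib

/-- Words over a countably infinite alphabet of variables (identified with ℕ). -/
abbrev Wd := List ℕ

/-- Evaluation of a word in a monoid under an assignment of the variables. -/
def evalWord {M : Type*} [Monoid M] (φ : ℕ → M) (u : Wd) : M := (u.map φ).prod

/-- A monoid `M` satisfies the identity `e = (u, v)`. -/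
def Sat (M : Type*) [Monoid M] (e : Wd × Wd) : Prop :=
  ∀ φ : ℕ → M, evalWord φ e.1 = evalWord φ e.2

/-- The identity `e` is a consequence of the set of identities `Γ`:
every monoid satisfying all identities of `Γ` satisfies `e`. -/
def Consequence (Γ : Set (Wd × Wd)) (e : Wd × Wd) : Prop :=
  ∀ (M : Type) [Monoid M], (∀ f ∈ Γ, Sat M f) → Sat M e

/-- The content of a word: the set of variables occurring in it. -/
def conW (u : Wd) : Set ℕ := {x | x ∈ u}

/-- The set of linear (exactly once occurring) variables of a word. -/
def linW (u : Wd) : Set ℕ := {x | u.count x = 1}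

/-- The set of non-linear (more than once occurring) variables of a word. -/
def nonW (u : Wd) : Set ℕ := {x | 2 ≤ u.count x}

/-- `restrict u X` is the word obtained from `u` by deleting all occurrences of
all variables not in `X`. -/
noncomputable def restrict (u : Wd) (X : Set ℕ) : Wd :=
  u.filter (fun a => @decide (a ∈ X) (Classical.propDecidable _))

/-- The closure of a set of identities under deleting variables. -/
def delta (Γ : Set (Wd × Wd)) : Set (Wd × Wd) :=
  {e | ∃ f ∈ Γ, ∃ X : Set ℕ, e = (restrict f.1 X, restrict f.2 X)}

/-- A word is almost-linear if it has at most one non-linear variable. -/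
def AlmostLinearW (u : Wd) : Prop := ∀ x y, 2 ≤ u.count x → 2 ≤ u.count y → x = y

/-- An identity is almost-linear if both of its sides are almost-linear words. -/
def AlmostLinearId (e : Wd × Wd) : Prop := AlmostLinearW e.1 ∧ AlmostLinearW e.2

/-- An identity is regular if both sides have the same content. -/
def RegularId (e : Wd × Wd) : Prop := conW e.1 = conW e.2

/-- A word `u` is an isoterm for a monoid `M` if the only word `v` with
`M ⊨ u ≈ v` is `u` itself. -/
def Isoterm (M : Type*) [Monoid M] (u : Wd) : Prop := ∀ v : Wd, Sat M (u, v) → v = u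

/-- An identity `u ≈ v` is block-balanced if `u(x, lin u) = v(x, lin u)`
for every variable `x`. -/
def BlockBalanced (e : Wd × Wd) : Prop :=
  ∀ x : ℕ, restrict e.1 ({x} ∪ linW e.1) = restrict e.2 ({x} ∪ linW e.1)

/-- A monoid is finitely based: some finite set of its identities implies all of them. -/
def FinitelyBased (S : Type*) [Monoid S] : Prop :=
  ∃ Γ : Set (Wd × Wd), Γ.Finite ∧ (∀ e ∈ Γ, Sat S e) ∧
    ∀ e : Wd × Wd, Sat S e → Consequence Γ e

/-- Index of the first occurrence of a variable in a word. -/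
def firstIdx (u : Wd) (x : ℕ) : ℕ := u.idxOf x

/-- Index of the last occurrence of a variable in a word. -/
def lastIdx (u : Wd) (x : ℕ) : ℕ := u.length - 1 - u.reverse.idxOf x

/-- σ1 : x y t1 x t2 y ≈ y x t1 x t2 y, with x=0, y=1, t1=2, t2=3. -/
def sigma1 : Wd × Wd := ([0,1,2,0,3,1], [1,0,2,0,3,1])

/-- σμ : x t1 x y t2 y ≈ x t1 y x t2 y, with x=0, y=1, t1=2, t2=3. -/
def sigmaMu : Wd × Wd := ([0,2,0,1,3,1], [0,2,1,0,3,1])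

/-- σ2 : x t1 y t2 x y ≈ x t1 y t2 y x, with x=0, y=1, t1=2, t2=3. -/
def sigma2 : Wd × Wd := ([0,2,1,3,0,1], [0,2,1,3,1,0])

/-- Property P₁,₂: same linear and non-linear variables, and for all variables
`x, y` of the content, the first occurrence of `x` precedes the last occurrence
of `y` on one side iff it does on the other side. -/
def P12 (e : Wd × Wd) : Prop :=
  linW e.1 = linW e.2 ∧ nonW e.1 = nonW e.2 ∧
  ∀ x ∈ conW e.1, ∀ y ∈ conW e.1,
    (firstIdx e.1 x < lastIdx e.1 y ↔ firstIdx e.2 x < lastIdx e.2 y)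

/-- Applying a substitution (a map from variables to words) to a word. -/
def substW (Θ : ℕ → Wd) (u : Wd) : Wd := (u.map Θ).flatten

/-- A balanced identity: each variable occurs equally often on both sides. -/
def BalancedId (e : Wd × Wd) : Prop := ∀ x : ℕ, e.1.count x = e.2.count x

/-- The list of positions of the occurrences of `x` in `u`. -/
def occPos (u : Wd) (x : ℕ) : List ℕ :=
  (List.range u.length).filter (fun j => u.getD j 0 == x)

/-- Index of the `i`-th (1-based) occurrence of `x` in `u`. -/
def nthOcc (u : Wd) (x : ℕ) (i : ℕ) : ℕ := (occPos u x).getD (i - 1) 0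

/-- Property P₁,₁: the order of first occurrences of distinct variables agrees. -/
def P11 (e : Wd × Wd) : Prop :=
  linW e.1 = linW e.2 ∧ nonW e.1 = nonW e.2 ∧
  ∀ x ∈ conW e.1, ∀ y ∈ conW e.1, x ≠ y →
    (firstIdx e.1 x < firstIdx e.1 y ↔ firstIdx e.2 x < firstIdx e.2 y)

/-- Property P₂,₂: the order of last occurrences of distinct variables agrees. -/
def P22 (e : Wd × Wd) : Prop :=
  linW e.1 = linW e.2 ∧ nonW e.1 = nonW e.2 ∧
  ∀ x ∈ conW e.1, ∀ y ∈ conW e.1, x ≠ y →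
    (lastIdx e.1 x < lastIdx e.1 y ↔ lastIdx e.2 x < lastIdx e.2 y)

/-- Property P₁,μ for balanced identities. -/
def P1mu (e : Wd × Wd) : Prop :=
  BalancedId e ∧
  ∀ x ∈ conW e.1, ∀ y ∈ conW e.1, x ≠ y →
    ∀ i : ℕ, 1 ≤ i → i ≤ e.1.count y →
      (firstIdx e.1 x < nthOcc e.1 y i ↔ firstIdx e.2 x < nthOcc e.2 y i)

/-- Property Pμ,₂ for balanced identities. -/
def Pmu2 (e : Wd × Wd) : Prop :=
  BalancedId e ∧
  ∀ x ∈ conW e.1, ∀ y ∈ conW e.1, x ≠ y →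
    ∀ i : ℕ, 1 ≤ i → i ≤ e.1.count x →
      (nthOcc e.1 x i < lastIdx e.1 y ↔ nthOcc e.2 x i < lastIdx e.2 y)

/-!
Each property is recast in a form that substitution visibly preserves.

P₁,₂ asks, for every pair of letters `x, y`, whether some `x` precedes some `y`, i.e. whether
`[x, y] <+ u`; in `Θ(u)` such a pair comes either from inside a single block `Θ(z)` or from two
blocks `Θ(z), Θ(z')` with `[z, z'] <+ u`.

P₁,₁ (resp. P₁,μ) says that for every letter `a` the prefixes of `u` and `v` in front of the first
`a` have the same content (resp. are permutations of each other). This extends from the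
predicates `· ≠ a` to all predicates `p` (`TakeWhileRel`), and that stronger form is stable: the
prefix of `Θ(u)` in front of the first letter failing `p` is `Θ` of the prefix of `u` in front of
the first block not entirely satisfying `p`, followed by a piece of that block.

P₂,₂ and P_μ,₂ are P₁,₁ and P₁,μ for the reversed words, and the classification of letters into
linear and non-linear ones survives because capping counts at 2 commutes with sums and products.
-/

namespace List

variable {α : Type*}

theorem takeWhile_append_of_not_all {p : α → Bool} {l₁ l₂ : List α} (h : l₁.all p = false) :
    (l₁ ++ l₂).takeWhile p = l₁.takeWhile p := by
  induction l₁ with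
  | nil => simp at h
  | cons x l ih =>
    by_cases hx : p x
    · simp only [all_cons, hx, Bool.true_and] at h
      simp [hx, ih h]
    · simp [hx]

theorem dropWhile_append_of_not_all {p : α → Bool} {l₁ l₂ : List α} (h : l₁.all p = false) :
    (l₁ ++ l₂).dropWhile p = l₁.dropWhile p ++ l₂ := by
  induction l₁ with
  | nil => simp at h
  | cons x l ih =>
    by_cases hx : p x
    · simp only [all_cons, hx, Bool.true_and] at h
      simp [hx, ih h]
    · simp [hx]

theorem pair_sublist_append_iff {l₁ l₂ : List α} {a b : α} :
    [a, b] <+ l₁ ++ l₂ ↔ [a, b] <+ l₁ ∨ a ∈ l₁ ∧ b ∈ l₂ ∨ [a, b] <+ l₂ := by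
  rw [sublist_append_iff]
  constructor
  · rintro ⟨_ | ⟨x, _ | ⟨y, _ | _⟩⟩, l₂', h, h₁, h₂⟩ <;>
      simp only [cons_append, nil_append, cons.injEq] at h
    · exact .inr (.inr (h ▸ h₂))
    · obtain ⟨rfl, rfl⟩ := h
      exact .inr (.inl ⟨by simpa using h₁, by simpa using h₂⟩)
    · obtain ⟨rfl, rfl, rfl⟩ := h
      exact .inl h₁
    · simp at h
  · rintro (h | ⟨h₁, h₂⟩ | h)
    · exact ⟨[a, b], [], by simp, h, by simp⟩
    · exact ⟨[a], [b], rfl, by simpa using h₁, by simpa using h₂⟩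
    · exact ⟨[], [a, b], rfl, by simp, h⟩

theorem pair_sublist_append_cons_iff {s t : List α} {a b : α} (ha : a ∉ s) :
    [a, b] <+ s ++ a :: t ↔ b ∈ t := by
  induction s with
  | nil => simp
  | cons c s ih =>
    obtain ⟨hac, has⟩ := not_or.1 (mem_cons.not.1 ha)
    simp [sublist_cons_iff, ih has, hac]

theorem sum_map_eq_sum_count_mul [DecidableEq α] {w : List α} {S : Finset α}
    (hS : w.toFinset ⊆ S) (g : α → ℕ) : (w.map g).sum = ∑ z ∈ S, w.count z * g z := by
  rw [Finset.sum_list_map_count]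
  exact Finset.sum_subset hS fun z _ hz => by simp [count_eq_zero.2 (by simpa using hz)]

theorem takeWhile_bne_eq_take_idxOf [BEq α] (l : List α) (a : α) :
    l.takeWhile (· != a) = l.take (l.idxOf a) := by
  rw [takeWhile_eq_take_findIdx_not]
  simp [idxOf, bne]

theorem idxOfNth_lt_iff [BEq α] {w : List α} {b : α} {n k : ℕ} (hn : n < w.count b) :
    w.idxOfNth b n < k ↔ n < (w.take k).count b := by
  induction w generalizing n k with
  | nil => simp at hn
  | cons x w ih => cases n <;> cases k <;> grind

variable [BEq α] [LawfulBEq α]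

theorem idxOf_append_cons {s t : List α} {a : α} (ha : a ∉ s) :
    (s ++ a :: t).idxOf a = s.length := by
  simp [idxOf_append, ha]

theorem takeWhile_bne_append_cons {s t : List α} {a : α} (ha : a ∉ s) :
    (s ++ a :: t).takeWhile (· != a) = s := by
  have hs : ∀ z ∈ s, (z != a) = true := fun z hz => by simpa using ne_of_mem_of_not_mem hz ha
  rw [takeWhile_append_of_pos hs, takeWhile_cons_of_neg (by simp), append_nil]

theorem notMem_takeWhile_bne {l : List α} {a z : α} (h : z ∈ l → z = a) :
    z ∉ l.takeWhile (· != a) := fun hz => by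
  simpa [h (takeWhile_subset _ hz)] using mem_takeWhile_imp hz

end List

theorem Nat.min_mul_eq_min_min_mul (a b n : ℕ) : min (a * b) n = min (min a n * b) n := by
  rcases le_total a n with h | h
  · rw [min_eq_left h]
  · rcases Nat.eq_zero_or_pos b with rfl | hb
    · simp
    · have h₁ : n ≤ a * b := h.trans (Nat.le_mul_of_pos_right a hb)
      have h₂ : n ≤ n * b := Nat.le_mul_of_pos_right n hb
      rw [min_eq_right h, min_eq_right h₁, min_eq_right h₂]

theorem Nat.eq_of_forall_lt_iff {m m' N : ℕ} (hm : m ≤ N) (hm' : m' ≤ N)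
    (h : ∀ i, 1 ≤ i → i ≤ N → (m < i ↔ m' < i)) : m = m' := by
  by_contra hne
  rcases Nat.lt_or_gt_of_ne hne with hlt | hlt
  · have := h (m + 1) (by omega) (by omega)
    omega
  · have := h (m' + 1) (by omega) (by omega)
    omega

theorem Finset.min_sum_eq_min_sum_min {ι : Type*} (S : Finset ι) (f : ι → ℕ) (n : ℕ) :
    min (∑ i ∈ S, f i) n = min (∑ i ∈ S, min (f i) n) n := by
  classical
  induction S using Finset.induction_on with
  | empty => simp
  | insert a S ha ih =>
    rw [Finset.sum_insert ha, Finset.sum_insert ha]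
    omega

theorem List.min_sum_map_eq {α : Type*} [DecidableEq α] {u v : List α} {n : ℕ}
    (h : ∀ z, min (u.count z) n = min (v.count z) n) (g : α → ℕ) :
    min (u.map g).sum n = min (v.map g).sum n := by
  rw [sum_map_eq_sum_count_mul Finset.subset_union_left g,
    sum_map_eq_sum_count_mul Finset.subset_union_right g, Finset.min_sum_eq_min_sum_min,
    Finset.min_sum_eq_min_sum_min (f := fun z => v.count z * g z)]
  congr 1
  refine Finset.sum_congr rfl fun z _ => ?_
  rw [Nat.min_mul_eq_min_min_mul, h z, ← Nat.min_mul_eq_min_min_mul]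

section Positions

open List

variable {w : Wd} {a b x y i k : ℕ}

theorem occPos_cons (x b : ℕ) (w : Wd) :
    occPos (x :: w) b = (if x = b then [0] else []) ++ (occPos w b).map (· + 1) := by
  simp only [occPos, length_cons, range_succ_eq_map, filter_cons, filter_map]
  split_ifs <;> simp_all [Function.comp_def]

theorem occPos_eq_idxsOf (w : Wd) (b : ℕ) : occPos w b = w.idxsOf b := by
  induction w with
  | nil => rfl
  | cons x w ih =>
    simp only [occPos_cons, ih, idxsOf, findIdxs_cons, findIdxs_start (s := 1)]
    split_ifs <;> simp_all

theorem nthOcc_eq_idxOfNth (h1 : 1 ≤ i) (h2 : i ≤ w.count b) :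
    nthOcc w b i = w.idxOfNth b (i - 1) := by
  have hi : i - 1 < (occPos w b).length := by
    rw [occPos_eq_idxsOf, idxsOf, length_findIdxs]
    simp only [count] at h2 ⊢
    omega
  rw [nthOcc, getD_eq_getElem _ _ hi]
  simp only [occPos_eq_idxsOf, getElem_idxOf_eq_idxOfNth]

theorem nthOcc_lt_iff (h1 : 1 ≤ i) (h2 : i ≤ w.count b) :
    nthOcc w b i < k ↔ i ≤ (w.take k).count b := by
  rw [nthOcc_eq_idxOfNth h1 h2, idxOfNth_lt_iff (by omega)]
  omega

theorem firstIdx_lt_firstIdx_iff (hx : x ∈ w) :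
    firstIdx w x < firstIdx w y ↔ x ∈ w.takeWhile (· != y) := by
  rw [takeWhile_bne_eq_take_idxOf, mem_take_iff_idxOf_lt hx, firstIdx, firstIdx]

theorem lastIdx_lt_lastIdx_iff (hx : x ∈ w) (hy : y ∈ w) :
    lastIdx w x < lastIdx w y ↔ firstIdx w.reverse y < firstIdx w.reverse x := by
  have hx' := idxOf_lt_length_iff.2 (mem_reverse.2 hx)
  have hy' := idxOf_lt_length_iff.2 (mem_reverse.2 hy)
  simp only [lastIdx, firstIdx, length_reverse] at *
  omega

theorem lt_lastIdx_iff (hb : b ∈ w) : k < lastIdx w b ↔ b ∈ w.drop (k + 1) := by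
  have hlt : w.reverse.idxOf b < w.length := by
    simpa using idxOf_lt_length_iff.2 (mem_reverse.2 hb)
  rw [← mem_reverse, reverse_drop, mem_take_iff_idxOf_lt (mem_reverse.2 hb), lastIdx]
  omega

theorem firstIdx_lt_lastIdx_iff (ha : a ∈ w) (hb : b ∈ w) :
    firstIdx w a < lastIdx w b ↔ [a, b] <+ w := by
  obtain ⟨s, t, rfl, has⟩ := eq_append_cons_of_mem ha
  rw [lt_lastIdx_iff hb, firstIdx, idxOf_append_cons has, pair_sublist_append_cons_iff has]
  simp

theorem firstIdx_lt_nthOcc_iff (ha : a ∈ w) (hab : a ≠ b) (h1 : 1 ≤ i) (h2 : i ≤ w.count b) :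
    firstIdx w a < nthOcc w b i ↔ (w.takeWhile (· != a)).count b < i := by
  have hk := nthOcc_lt_iff h1 h2 (k := firstIdx w a + 1)
  obtain ⟨s, t, rfl, has⟩ := eq_append_cons_of_mem ha
  rw [firstIdx, idxOf_append_cons has, takeWhile_bne_append_cons has] at *
  have htake : ((s ++ a :: t).take (s.length + 1)).count b = s.count b := by
    simp [take_append, take_of_length_le, hab]
  rw [htake] at hk
  omega

theorem nthOcc_lt_lastIdx_iff (hb : b ∈ w) (hab : a ≠ b) (h1 : 1 ≤ i) (h2 : i ≤ w.count a) :
    nthOcc w a i < lastIdx w b ↔ i + (w.reverse.takeWhile (· != b)).count a ≤ w.count a := by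
  obtain ⟨s, t, hw, hbs⟩ := eq_append_cons_of_mem (mem_reverse.2 hb)
  have hw' : w = t.reverse ++ b :: s.reverse := by rw [← reverse_reverse w, hw]; simp
  have hlast : lastIdx w b = t.length := by
    rw [lastIdx, hw, idxOf_append_cons hbs, hw']
    simp
  rw [hlast, nthOcc_lt_iff h1 h2, hw, takeWhile_bne_append_cons hbs, hw']
  simp [Ne.symm hab]

end Positions

section Substitution

open List

variable {Θ : ℕ → Wd}

@[simp] theorem substW_nil : substW Θ [] = [] := rfl

@[simp] theorem substW_cons (x : ℕ) (u : Wd) : substW Θ (x :: u) = Θ x ++ substW Θ u := by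
  simp [substW]

theorem mem_substW {u : Wd} {a : ℕ} : a ∈ substW Θ u ↔ ∃ x ∈ u, a ∈ Θ x := by
  simp [substW]

theorem count_substW (u : Wd) (a : ℕ) :
    (substW Θ u).count a = (u.map fun x => (Θ x).count a).sum := by
  simp [substW, count_flatten, Function.comp_def]

theorem reverse_substW (u : Wd) :
    (substW Θ u).reverse = substW (fun x => (Θ x).reverse) u.reverse := by
  simp [substW, reverse_flatten, map_reverse, Function.comp_def]

theorem List.Perm.substW {u v : Wd} (h : u ~ v) : substW Θ u ~ substW Θ v :=
  (h.map Θ).flatten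

theorem min_count_substW_eq (Θ : ℕ → Wd) {u v : Wd} {n : ℕ}
    (h : ∀ z, min (u.count z) n = min (v.count z) n) (a : ℕ) :
    min ((substW Θ u).count a) n = min ((substW Θ v).count a) n := by
  simp only [count_substW]
  exact min_sum_map_eq h _

theorem pair_sublist_substW_iff {u : Wd} {a b : ℕ} :
    [a, b] <+ substW Θ u ↔
      (∃ x ∈ u, [a, b] <+ Θ x) ∨ ∃ x y, [x, y] <+ u ∧ a ∈ Θ x ∧ b ∈ Θ y := by
  induction u with
  | nil => simp
  | cons c u ih =>
    simp only [substW_cons, pair_sublist_append_iff, ih, mem_substW, mem_cons,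
      sublist_cons_iff, cons.injEq]
    aesop

theorem takeWhile_substW (p : ℕ → Bool) (u : Wd) :
    (substW Θ u).takeWhile p = substW Θ (u.takeWhile fun x => (Θ x).all p) ++
      ((u.dropWhile fun x => (Θ x).all p).head?.elim [] fun x => (Θ x).takeWhile p) := by
  induction u with
  | nil => simp
  | cons c u ih =>
    by_cases hc : (Θ c).all p
    · simp_all [takeWhile_append_of_pos]
    · simp_all [takeWhile_append_of_not_all]

theorem head?_dropWhile_substW (p : ℕ → Bool) (u : Wd) :
    ((substW Θ u).dropWhile p).head? =
      (u.dropWhile fun x => (Θ x).all p).head?.bind fun x => ((Θ x).dropWhile p).head? := by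
  induction u with
  | nil => simp
  | cons c u ih =>
    by_cases hc : (Θ c).all p
    · simp_all [dropWhile_append_of_pos]
    · have hne : (Θ c).dropWhile p ≠ [] := by simpa [dropWhile_eq_nil_iff] using hc
      obtain ⟨y, l, hyl⟩ := exists_cons_of_ne_nil hne
      simp [dropWhile_append_of_not_all (Bool.eq_false_iff.2 hc), hyl, hc]

end Substitution

section TakeWhileRel

open List

/-- Cutting `u` and `v` in front of the first letter failing `p` leaves `r`-related prefixes and
the same cut letter, for every `p`. -/
def TakeWhileRel {α : Type*} (r : List α → List α → Prop) (u v : List α) : Prop :=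
  ∀ p : α → Bool, r (u.takeWhile p) (v.takeWhile p) ∧ (u.dropWhile p).head? = (v.dropWhile p).head?

theorem takeWhileRel_iff {α : Type*} [BEq α] [LawfulBEq α] {r : List α → List α → Prop}
    (hsymm : ∀ ⦃s s'⦄, r s s' → r s' s) (hmem : ∀ ⦃s s'⦄, r s s' → ∀ z ∈ s, z ∈ s')
    {u v : List α} :
    TakeWhileRel r u v ↔ r u v ∧ ∀ a ∈ u, r (u.takeWhile (· != a)) (v.takeWhile (· != a)) := by
  refine ⟨fun h => ⟨?_, fun a _ => (h _).1⟩, ?_⟩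
  · simpa only [takeWhile_eq_self_iff.2 fun _ _ => rfl] using (h fun _ => true).1
  rintro ⟨huv, hpre⟩ p
  rcases hcut : u.dropWhile p with _ | ⟨x, t⟩
  · have hu : ∀ z ∈ u, p z := dropWhile_eq_nil_iff.1 hcut
    have hv : ∀ z ∈ v, p z := fun z hz => hu z (hmem (hsymm huv) z hz)
    rw [takeWhile_eq_self_iff.2 hu, takeWhile_eq_self_iff.2 hv, dropWhile_eq_nil_iff.2 hv]
    exact ⟨huv, rfl⟩
  · have hpx : p x = false := by simpa [hcut] using head?_dropWhile_not p u
    have hs : ∀ z ∈ u.takeWhile p, p z := fun z hz => mem_takeWhile_imp hz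
    have hu : u = u.takeWhile p ++ x :: t := by rw [← hcut, takeWhile_append_dropWhile]
    have hxu : x ∈ u := by rw [hu]; simp
    have hpre_u : u.takeWhile (· != x) = u.takeWhile p := by
      conv_lhs => rw [hu]
      exact takeWhile_bne_append_cons fun hx => by simp [hs x hx] at hpx
    obtain ⟨s', t', hv, hxs'⟩ := eq_append_cons_of_mem (hmem huv x hxu)
    have hrel := hpre x hxu
    rw [hpre_u, hv, takeWhile_bne_append_cons hxs'] at hrel
    have hs' : ∀ z ∈ s', p z := fun z hz => hs z (hmem (hsymm hrel) z hz)
    rw [hv, takeWhile_append_of_pos hs', takeWhile_cons_of_neg (by simp [hpx]),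
      dropWhile_append_of_pos hs', dropWhile_cons_of_neg (by simp [hpx])]
    simpa using hrel

theorem TakeWhileRel.substW {Θ : ℕ → Wd} {r : Wd → Wd → Prop}
    (hr : ∀ ⦃s s'⦄ t, r s s' → r (substW Θ s ++ t) (substW Θ s' ++ t)) {u v : Wd}
    (h : TakeWhileRel r u v) : TakeWhileRel r (substW Θ u) (substW Θ v) := by
  intro p
  obtain ⟨hpre, hcut⟩ := h fun x => (Θ x).all p
  rw [takeWhile_substW, takeWhile_substW, head?_dropWhile_substW, head?_dropWhile_substW, hcut]
  exact ⟨hr _ hpre, rfl⟩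

end TakeWhileRel

section Properties

open List

variable {u v : Wd} {Θ : ℕ → Wd}

theorem mem_iff_of_min_count_eq {n : ℕ} (hn : 0 < n)
    (h : ∀ z, min (u.count z) n = min (v.count z) n) (z : ℕ) : z ∈ u ↔ z ∈ v := by
  rw [← count_pos_iff, ← count_pos_iff]
  have := h z
  omega

theorem linW_eq_and_nonW_eq_iff :
    linW u = linW v ∧ nonW u = nonW v ↔ ∀ z, min (u.count z) 2 = min (v.count z) 2 := by
  simp only [Set.ext_iff, linW, nonW, Set.mem_ofPred, ← forall_and]
  exact forall_congr' fun z => by omega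

@[simp] theorem conW_reverse (w : Wd) : conW w.reverse = conW w := by simp [conW]

@[simp] theorem linW_reverse (w : Wd) : linW w.reverse = linW w := by simp [linW]

@[simp] theorem nonW_reverse (w : Wd) : nonW w.reverse = nonW w := by simp [nonW]

theorem p11_iff : P11 (u, v) ↔ (∀ z, min (u.count z) 2 = min (v.count z) 2) ∧
    TakeWhileRel (fun s s' => conW s = conW s') u v := by
  rw [takeWhileRel_iff (r := fun s s' => conW s = conW s') (fun _ _ h => h.symm)
    fun _ _ h z => (Set.ext_iff.1 h z).1, P11, ← and_assoc, linW_eq_and_nonW_eq_iff]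
  refine and_congr_right fun hcap => ?_
  have hmem := mem_iff_of_min_count_eq two_pos hcap
  rw [and_iff_right (show conW u = conW v from Set.ext hmem)]
  constructor
  · intro h a ha
    ext z
    by_cases hz : z ∈ u ∧ z ≠ a
    · exact (firstIdx_lt_firstIdx_iff hz.1).symm.trans
        ((h z hz.1 a ha hz.2).trans (firstIdx_lt_firstIdx_iff ((hmem z).1 hz.1)))
    · have hza : z ∈ u → z = a := fun hzu => not_not.1 fun hne => hz ⟨hzu, hne⟩
      exact iff_of_false (notMem_takeWhile_bne hza)
        (notMem_takeWhile_bne fun hzv => hza ((hmem z).2 hzv))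
  · intro h x hx y hy hxy
    rw [firstIdx_lt_firstIdx_iff hx, firstIdx_lt_firstIdx_iff ((hmem x).1 hx)]
    exact Set.ext_iff.1 (h y hy) x

theorem p22_iff_p11_reverse : P22 (u, v) ↔ P11 (u.reverse, v.reverse) := by
  simp only [P22, P11, linW_reverse, nonW_reverse, conW_reverse]
  refine and_congr_right fun hlin => and_congr_right fun hnon => ?_
  have hmem := mem_iff_of_min_count_eq two_pos (linW_eq_and_nonW_eq_iff.1 ⟨hlin, hnon⟩)
  constructor
  · intro h x hx y hy hxy
    rw [← lastIdx_lt_lastIdx_iff hy hx, ← lastIdx_lt_lastIdx_iff ((hmem y).1 hy) ((hmem x).1 hx)]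
    exact h y hy x hx hxy.symm
  · intro h x hx y hy hxy
    rw [lastIdx_lt_lastIdx_iff hx hy, lastIdx_lt_lastIdx_iff ((hmem x).1 hx) ((hmem y).1 hy)]
    exact h y hy x hx hxy.symm

theorem p12_iff : P12 (u, v) ↔ (∀ z, min (u.count z) 2 = min (v.count z) 2) ∧
    ∀ x y, [x, y] <+ u ↔ [x, y] <+ v := by
  rw [P12, ← and_assoc, linW_eq_and_nonW_eq_iff]
  refine and_congr_right fun hcap => ?_
  have hmem := mem_iff_of_min_count_eq two_pos hcap
  constructor
  · intro h x y
    by_cases hxy : x ∈ u ∧ y ∈ u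
    · rw [← firstIdx_lt_lastIdx_iff hxy.1 hxy.2,
        ← firstIdx_lt_lastIdx_iff ((hmem x).1 hxy.1) ((hmem y).1 hxy.2)]
      exact h x hxy.1 y hxy.2
    · have hsub : ∀ w : Wd, [x, y] <+ w → x ∈ w ∧ y ∈ w := fun w h =>
        ⟨h.subset (by simp), h.subset (by simp)⟩
      exact iff_of_false (fun h => hxy (hsub u h)) fun h => hxy (by simpa [hmem] using hsub v h)
  · intro h x hx y hy
    rw [firstIdx_lt_lastIdx_iff hx hy, firstIdx_lt_lastIdx_iff ((hmem x).1 hx) ((hmem y).1 hy)]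
    exact h x y

theorem p1mu_iff : P1mu (u, v) ↔ TakeWhileRel Perm u v := by
  rw [takeWhileRel_iff (fun _ _ h => h.symm) fun _ _ h => h.subset, P1mu,
    show BalancedId (u, v) ↔ u ~ v from perm_iff_count.symm]
  refine and_congr_right fun huv => forall₂_congr fun a ha => ?_
  have hcount (b : ℕ) : v.count b = u.count b := (huv.count_eq b).symm
  have hav : a ∈ v := huv.subset ha
  rw [perm_iff_count]
  constructor
  · intro h b
    by_cases hb : b ∈ u ∧ a ≠ b
    · refine Nat.eq_of_forall_lt_iff ((takeWhile_sublist _).count_le b)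
        (hcount b ▸ (takeWhile_sublist _).count_le b) fun i h1 h2 => ?_
      rw [← firstIdx_lt_nthOcc_iff ha hb.2 h1 h2,
        ← firstIdx_lt_nthOcc_iff hav hb.2 h1 (hcount b ▸ h2)]
      exact h b hb.1 hb.2 i h1 h2
    · have hba : b ∈ u → b = a := fun hbu => not_not.1 fun hne => hb ⟨hbu, Ne.symm hne⟩
      rw [count_eq_zero.2 (notMem_takeWhile_bne hba),
        count_eq_zero.2 (notMem_takeWhile_bne fun hbv => hba (huv.symm.subset hbv))]
  · intro h b _ hab i h1 h2
    rw [firstIdx_lt_nthOcc_iff ha hab h1 h2, firstIdx_lt_nthOcc_iff hav hab h1 (hcount b ▸ h2),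
      h b]

theorem pmu2_iff_p1mu_reverse : Pmu2 (u, v) ↔ P1mu (u.reverse, v.reverse) := by
  simp only [Pmu2, P1mu, BalancedId, conW_reverse, count_reverse]
  refine and_congr_right fun hbal => ?_
  have hcount (z : ℕ) : v.count z = u.count z := (hbal z).symm
  have hmem (z : ℕ) (hz : z ∈ u) : z ∈ v := count_pos_iff.1 (hcount z ▸ count_pos_iff.2 hz)
  have item : ∀ x ∈ u, ∀ y ∈ u, x ≠ y →
      ((∀ i, 1 ≤ i → i ≤ u.count x → (nthOcc u x i < lastIdx u y ↔ nthOcc v x i < lastIdx v y)) ↔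
      ∀ i, 1 ≤ i → i ≤ u.count x → (firstIdx u.reverse y < nthOcc u.reverse x i ↔
        firstIdx v.reverse y < nthOcc v.reverse x i)) := by
    intro x hx y hy hxy
    set N := u.count x
    set m := (u.reverse.takeWhile (· != y)).count x
    set m' := (v.reverse.takeWhile (· != y)).count x
    calc _ ↔ ∀ i, 1 ≤ i → i ≤ N → (i + m ≤ N ↔ i + m' ≤ N) :=
          forall_congr' fun i => imp_congr_right fun h1 => imp_congr_right fun h2 => by
            rw [nthOcc_lt_lastIdx_iff hy hxy h1 h2,
              nthOcc_lt_lastIdx_iff (hmem y hy) hxy h1 (hcount x ▸ h2), hcount]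
      _ ↔ ∀ i, 1 ≤ i → i ≤ N → (m < i ↔ m' < i) := by
          constructor <;> intro h i h1 h2 <;> have := h (N + 1 - i) (by omega) (by omega) <;> omega
      _ ↔ _ := forall_congr' fun i => imp_congr_right fun h1 => imp_congr_right fun h2 => by
            rw [firstIdx_lt_nthOcc_iff (mem_reverse.2 hy) hxy.symm h1 (by simpa using h2),
              firstIdx_lt_nthOcc_iff (mem_reverse.2 (hmem y hy)) hxy.symm h1
                (by simpa [hcount] using h2)]
  constructor
  · intro h y hy x hx hyx
    exact (item x hx y hy hyx.symm).1 (h x hx y hy hyx.symm)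
  · intro h x hx y hy hxy
    exact (item x hx y hy hxy).2 (h y hy x hx hxy.symm)

theorem P11.substW (h : P11 (u, v)) : P11 (substW Θ u, substW Θ v) := by
  rw [p11_iff] at h ⊢
  refine ⟨min_count_substW_eq Θ h.1, h.2.substW fun s s' t hs => ?_⟩
  simp only [conW, Set.ext_iff, Set.mem_ofPred] at hs ⊢
  simp [mem_substW, hs]

theorem P22.substW (h : P22 (u, v)) : P22 (substW Θ u, substW Θ v) := by
  rw [p22_iff_p11_reverse, reverse_substW, reverse_substW] at *
  exact P11.substW h

theorem P12.substW (h : P12 (u, v)) : P12 (substW Θ u, substW Θ v) := by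
  rw [p12_iff] at h ⊢
  obtain ⟨hcap, hpair⟩ := h
  have hmem := mem_iff_of_min_count_eq two_pos hcap
  refine ⟨min_count_substW_eq Θ hcap, fun a b => ?_⟩
  simp only [pair_sublist_substW_iff, hpair, hmem]

theorem P1mu.substW (h : P1mu (u, v)) : P1mu (substW Θ u, substW Θ v) := by
  rw [p1mu_iff] at h ⊢
  exact h.substW fun s s' t hs => hs.substW.append_right t

theorem Pmu2.substW (h : Pmu2 (u, v)) : Pmu2 (substW Θ u, substW Θ v) := by
  rw [pmu2_iff_p1mu_reverse, reverse_substW, reverse_substW] at *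
  exact P1mu.substW h

end Properties

theorem stmt17_general (Θ : ℕ → Wd) (u v : Wd) :
    (P11 (u, v) → P11 (substW Θ u, substW Θ v)) ∧
    (P22 (u, v) → P22 (substW Θ u, substW Θ v)) ∧
    (P12 (u, v) → P12 (substW Θ u, substW Θ v)) ∧
    (P1mu (u, v) → P1mu (substW Θ u, substW Θ v)) ∧
    (Pmu2 (u, v) → Pmu2 (substW Θ u, substW Θ v)) :=
  ⟨P11.substW, P22.substW, P12.substW, P1mu.substW, Pmu2.substW⟩

theorem stmt17 (Θ : ℕ → Wd) (hΘ : ∀ a, Θ a ≠ []) (u v : Wd) :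
    (P11 (u, v) → P11 (substW Θ u, substW Θ v)) ∧
    (P22 (u, v) → P22 (substW Θ u, substW Θ v)) ∧
    (P12 (u, v) → P12 (substW Θ u, substW Θ v)) ∧
    (P1mu (u, v) → P1mu (substW Θ u, substW Θ v)) ∧
    (Pmu2 (u, v) → Pmu2 (substW Θ u, substW Θ v)) :=
  stmt17_general Θ u v
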